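/- Let a < b be real numbers and let m_n([a,b]) denote the infimum of sup_{x ∈ [a,b]} |P(x)| over monic real polynomials P of degree n. Then lim_{n→∞} m_n([a,b])^{1/n} = (b−a)/4; that is, cap([a,b]) = (b−a)/4. -/

import Mathlib

open Polynomial Filter

/-- The sup norm of a real polynomial on a set `K ⊆ ℝ`. -/
noncomputable def supNormOn (K : Set ℝ) (P : Polynomial ℝ) : ℝ :=
  sSup ((fun x => |P.eval x|) '' K)

/-- `m_n(K)`: the infimum of sup norms on `K` of monic real polynomials of degree `n`. -/
noncomputable def chebInf (K : Set ℝ) (n : ℕ) : ℝ :=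
  sInf (supNormOn K '' {P : Polynomial ℝ | P.Monic ∧ P.natDegree = n})

/-!
An affine change of variables carries `[a, b]` onto `[-1, 1]`. There the Chebyshev polynomial
`T n` has sup norm `1` and the largest leading coefficient, `2 ^ (n - 1)`, among polynomials of
degree `≤ n` bounded by `1`. Hence the rescaled, normalised `T n` is an extremal monic polynomial
and `m_n([a, b]) = 2 ((b - a) / 4) ^ n`, whose `n`-th root tends to `(b - a) / 4`.
-/

open Set Real

section SupNorm

variable {K : Set ℝ} (P : ℝ[X])

theorem abs_eval_le_supNormOn (hK : IsCompact K) {x : ℝ} (hx : x ∈ K) :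
    |P.eval x| ≤ supNormOn K P :=
  le_csSup (hK.image P.continuous.abs).bddAbove ⟨x, hx, rfl⟩

theorem supNormOn_le (hK : K.Nonempty) {M : ℝ} (hM : ∀ x ∈ K, |P.eval x| ≤ M) :
    supNormOn K P ≤ M :=
  csSup_le (hK.image _) (forall_mem_image.2 hM)

theorem supNormOn_nonneg (hK : IsCompact K) (hK' : K.Nonempty) : 0 ≤ supNormOn K P :=
  (abs_nonneg _).trans (abs_eval_le_supNormOn P hK hK'.some_mem)

end SupNorm

theorem Polynomial.Chebyshev.leadingCoeff_le_mul_of_forall_abs_le {n : ℕ} {P : ℝ[X]} {M : ℝ}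
    (hPdeg : P.degree ≤ n) (hM : 0 ≤ M) (hPbnd : ∀ x ∈ Icc (-1) 1, |P.eval x| ≤ M) :
    P.leadingCoeff ≤ 2 ^ (n - 1) * M := by
  rcases hM.eq_or_lt with rfl | hM
  · have hP : P = 0 := P.eq_zero_of_infinite_isRoot <| (Icc_infinite (by norm_num)).mono
      fun x hx => abs_nonpos_iff.1 (hPbnd x hx)
    simp [hP]
  · have key := leadingCoeff_le_of_forall_abs_le_one (P := Polynomial.C M⁻¹ * P)
      ((degree_C_mul (inv_ne_zero hM.ne')).trans_le hPdeg) fun x hx => by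
        rw [eval_mul, eval_C, abs_mul, abs_inv, abs_of_pos hM, inv_mul_le_iff₀ hM, mul_one]
        exact hPbnd x hx
    rw [leadingCoeff_mul, leadingCoeff_C, inv_mul_le_iff₀ hM] at key
    linarith

section Interval

variable {a b : ℝ}

noncomputable def chebyshevIcc (a b : ℝ) (n : ℕ) : ℝ[X] :=
  C (2 * ((b - a) / 4) ^ n) * (Chebyshev.T ℝ n).comp (C (2 / (b - a)) * (X - C ((a + b) / 2)))

theorem natDegree_chebyshevIcc (hab : a < b) (n : ℕ) : (chebyshevIcc a b n).natDegree = n := by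
  have hba : 0 < b - a := sub_pos.2 hab
  rw [chebyshevIcc, natDegree_C_mul (by positivity), natDegree_comp, natDegree_C_mul
    (by positivity), natDegree_X_sub_C, mul_one, Chebyshev.natDegree_T, Int.natAbs_natCast]

theorem monic_chebyshevIcc (hab : a < b) {n : ℕ} (hn : n ≠ 0) : (chebyshevIcc a b n).Monic := by
  have hba : 0 < b - a := sub_pos.2 hab
  obtain ⟨m, rfl⟩ : ∃ m, n = m + 1 := Nat.exists_eq_add_one.2 (Nat.pos_of_ne_zero hn)
  rw [Monic, chebyshevIcc, leadingCoeff_mul, leadingCoeff_C,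
    leadingCoeff_comp (by rw [natDegree_C_mul (by positivity), natDegree_X_sub_C]; simp),
    leadingCoeff_C_mul_of_isUnit (by simp [hba.ne']), leadingCoeff_X_sub_C,
    Chebyshev.leadingCoeff_T, Chebyshev.natDegree_T, Int.natAbs_natCast]
  have hunit : 2 * ((b - a) / 4) * (2 / (b - a)) = 1 := by field_simp; norm_num
  generalize b - a = d at hunit ⊢
  calc _ = (2 * (d / 4) * (2 / d)) ^ (m + 1) := by
        rw [Nat.add_sub_cancel, mul_one, mul_pow, mul_pow, pow_succ (2 : ℝ) m]; ring
    _ = 1 := by rw [hunit, one_pow]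

theorem abs_eval_chebyshevIcc_le (hab : a < b) (n : ℕ) {x : ℝ} (hx : x ∈ Icc a b) :
    |(chebyshevIcc a b n).eval x| ≤ 2 * ((b - a) / 4) ^ n := by
  have hba : 0 < b - a := sub_pos.2 hab
  have hy : |2 / (b - a) * (x - (a + b) / 2)| ≤ 1 := by
    rw [abs_mul, abs_of_pos (by positivity), div_mul_eq_mul_div, div_le_one hba,
      ← le_div_iff₀' two_pos, abs_le]
    constructor <;> linarith [hx.1, hx.2]
  rw [chebyshevIcc, eval_mul, eval_C, eval_comp, abs_mul, abs_of_pos (by positivity)]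
  simpa using mul_le_mul_of_nonneg_left (Chebyshev.abs_eval_T_real_le_one n (by simpa using hy))
    (by positivity : (0 : ℝ) ≤ 2 * ((b - a) / 4) ^ n)

theorem two_mul_pow_le_supNormOn_Icc (hab : a < b) {P : ℝ[X]} (hP : P.Monic)
    (hn : P.natDegree ≠ 0) : 2 * ((b - a) / 4) ^ P.natDegree ≤ supNormOn (Icc a b) P := by
  set n := P.natDegree
  set h := (b - a) / 2
  have hh : 0 < h := by simp only [h]; linarith
  set R := P.comp (C h * X + C ((a + b) / 2))
  have hR_deg : R.degree ≤ n := degree_le_of_natDegree_le <| by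
    rw [natDegree_comp, natDegree_linear hh.ne', mul_one]
  have hR_lc : R.leadingCoeff = h ^ n := by
    rw [leadingCoeff_comp (by rw [natDegree_linear hh.ne']; exact one_ne_zero), hP.leadingCoeff,
      one_mul, leadingCoeff_linear hh.ne']
  have hR_bnd : ∀ y ∈ Icc (-1 : ℝ) 1, |R.eval y| ≤ supNormOn (Icc a b) P := fun y hy => by
    rw [eval_comp]
    refine abs_eval_le_supNormOn P isCompact_Icc ?_
    simp only [eval_add, eval_mul, eval_C, eval_X, h]
    constructor <;> nlinarith [hy.1, hy.2]
  have key := Chebyshev.leadingCoeff_le_mul_of_forall_abs_le hR_deg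
    (supNormOn_nonneg P isCompact_Icc (nonempty_Icc.2 hab.le)) hR_bnd
  obtain ⟨m, hm⟩ : ∃ m, n = m + 1 := Nat.exists_eq_add_one.2 (Nat.pos_of_ne_zero hn)
  rw [hR_lc, hm, Nat.add_sub_cancel] at key
  rw [hm]
  calc 2 * ((b - a) / 4) ^ (m + 1) = h ^ (m + 1) / 2 ^ m := by
        rw [show (b - a) / 4 = h / 2 by simp only [h]; ring, div_pow, pow_succ (2 : ℝ) m]
        field_simp
    _ ≤ supNormOn (Icc a b) P := by rw [div_le_iff₀' (by positivity)]; exact key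

theorem supNormOn_chebyshevIcc (hab : a < b) {n : ℕ} (hn : n ≠ 0) :
    supNormOn (Icc a b) (chebyshevIcc a b n) = 2 * ((b - a) / 4) ^ n := by
  refine le_antisymm (supNormOn_le _ (nonempty_Icc.2 hab.le)
    fun x hx => abs_eval_chebyshevIcc_le hab n hx) ?_
  simpa [natDegree_chebyshevIcc hab n] using two_mul_pow_le_supNormOn_Icc hab
    (monic_chebyshevIcc hab hn) ((natDegree_chebyshevIcc hab n).trans_ne hn)

theorem chebInf_Icc (hab : a < b) {n : ℕ} (hn : n ≠ 0) :
    chebInf (Icc a b) n = 2 * ((b - a) / 4) ^ n := by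
  refine IsLeast.csInf_eq ⟨⟨chebyshevIcc a b n, ⟨monic_chebyshevIcc hab hn,
    natDegree_chebyshevIcc hab n⟩, supNormOn_chebyshevIcc hab hn⟩, ?_⟩
  rintro _ ⟨P, ⟨hP, rfl⟩, rfl⟩
  exact two_mul_pow_le_supNormOn_Icc hab hP hn

end Interval

/-- `cap([a,b]) = (b-a)/4`: the capacity of an interval. -/
theorem cap_Icc (a b : ℝ) (hab : a < b) :
    Tendsto (fun n : ℕ => chebInf (Set.Icc a b) n ^ ((n : ℝ)⁻¹)) atTop
      (nhds ((b - a) / 4)) := by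
  have hr : 0 ≤ (b - a) / 4 := by linarith
  have hlim : Tendsto (fun n : ℕ => (2 : ℝ) ^ (n : ℝ)⁻¹ * ((b - a) / 4)) atTop
      (nhds ((b - a) / 4)) := by
    simpa using (tendsto_const_nhds.rpow tendsto_inv_atTop_nhds_zero_nat
      (Or.inl two_ne_zero)).mul_const ((b - a) / 4)
  refine hlim.congr' ?_
  filter_upwards [eventually_ne_atTop 0] with n hn
  rw [chebInf_Icc hab hn, mul_rpow zero_le_two (by positivity), ← rpow_natCast, ← rpow_mul hr,
    mul_inv_cancel₀ (Nat.cast_ne_zero.2 hn), rpow_one]
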